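/- arXiv:2208.14257 — 4 statements merged into one kernel-verified Lean document; each statement's English description precedes it below -/
import Mathlib

section
/- The 4×4 matrix H(t) with diagonal (-3,-1,1,3), superdiagonal (√(3-3t), 2√(1-t), √(3-3t)) and subdiagonal (-√(3-3t), -2√(1-t), -√(3-3t)) has characteristic polynomial E⁴ - 10t E² + 9t², and hence for 0 ≤ t ≤ 1 its eigenvalues are √t, -√t, 3√t, -3√t. -/
/-! The matrix is tridiagonal with skew off-diagonal entries, so `det (E • 1 - H)` is given by the
continuant recursion in which the off-diagonal entries enter only through their squares. For
`t ≤ 1` these squares are `3 - 3t` and `4 - 4t`, and the determinant collapses to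
`E⁴ - 10tE² + 9t² = (E² - t)(E² - 9t)`, whose roots are `±√t` and `±3√t`. -/

open Real Matrix

theorem det_smul_one_sub_skewTridiagonal {R : Type*} [CommRing R] (a b c d x y z E : R) :
    det (E • (1 : Matrix (Fin 4) (Fin 4) R) -
        !![a, x, 0, 0; -x, b, y, 0; 0, -y, c, z; 0, 0, -z, d]) =
      (E - a) * (E - b) * (E - c) * (E - d) + x ^ 2 * (E - c) * (E - d)
        + y ^ 2 * (E - a) * (E - d) + z ^ 2 * (E - a) * (E - b) + x ^ 2 * z ^ 2 := by
  rw [det_succ_row_zero]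
  simp [Fin.sum_univ_succ, det_fin_three, one_apply, Fin.succAbove]
  ring

theorem quartic_eq_mul_of_sq_eq {s t E : ℝ} (hs : s ^ 2 = t) :
    E ^ 4 - 10 * t * E ^ 2 + 9 * t ^ 2 = (E - s) * (E + s) * (E - 3 * s) * (E + 3 * s) := by
  subst hs
  ring

/-- The 4×4 matrix `H(t)` with diagonal `(-3,-1,1,3)`, superdiagonal
`(√(3-3t), 2√(1-t), √(3-3t))` and antisymmetric subdiagonal has characteristic
polynomial `E⁴ - 10t E² + 9t²`; hence for `0 ≤ t ≤ 1` its eigenvalues are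
`√t, -√t, 3√t, -3√t`. -/
theorem stmt_3 (t : ℝ) (H : Matrix (Fin 4) (Fin 4) ℝ)
    (hH : H = !![-3, Real.sqrt (3 - 3*t), 0, 0;
                 -Real.sqrt (3 - 3*t), -1, 2 * Real.sqrt (1 - t), 0;
                 0, -(2 * Real.sqrt (1 - t)), 1, Real.sqrt (3 - 3*t);
                 0, 0, -Real.sqrt (3 - 3*t), 3]) :
    (t ≤ 1 →
      ∀ E : ℝ, Matrix.det (E • (1 : Matrix (Fin 4) (Fin 4) ℝ) - H)
          = E^4 - 10*t*E^2 + 9*t^2) ∧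
    (0 ≤ t → t ≤ 1 →
      Matrix.det ((Real.sqrt t) • (1 : Matrix (Fin 4) (Fin 4) ℝ) - H) = 0 ∧
      Matrix.det ((-Real.sqrt t) • (1 : Matrix (Fin 4) (Fin 4) ℝ) - H) = 0 ∧
      Matrix.det ((3 * Real.sqrt t) • (1 : Matrix (Fin 4) (Fin 4) ℝ) - H) = 0 ∧
      Matrix.det ((-(3 * Real.sqrt t)) • (1 : Matrix (Fin 4) (Fin 4) ℝ) - H) = 0) := by
  have charpoly (ht : t ≤ 1) (E : ℝ) :
      det (E • (1 : Matrix (Fin 4) (Fin 4) ℝ) - H) = E ^ 4 - 10 * t * E ^ 2 + 9 * t ^ 2 := by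
    have hx : √(3 - 3 * t) ^ 2 = 3 - 3 * t := sq_sqrt (by linarith)
    have hy : (2 * √(1 - t)) ^ 2 = 4 - 4 * t := by rw [mul_pow, sq_sqrt (by linarith)]; ring
    rw [hH, det_smul_one_sub_skewTridiagonal, hx, hy]
    ring
  refine ⟨charpoly, fun ht0 ht1 => ?_⟩
  simp only [charpoly ht1, quartic_eq_mul_of_sq_eq (sq_sqrt ht0)]
  refine ⟨?_, ?_, ?_, ?_⟩ <;> ring
end

section
/- The explicit 4×4 transition matrix Q with rows (-6, 6, -3, 1), (-6√3, 4√3, -√3, 0), (-6√3, 2√3, 0, 0), (-6, 0, 0, 0) is invertible and satisfies H·Q = Q·J, where H is the EP(4) Hamiltonian with diagonal (-3,-1,1,3) and off-diagonal elements ±√3, ±2, ±√3, and J is the 4×4 nilpotent Jordan block with ones on the superdiagonal. -/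
/-!
The columns `q₁, q₂, q₃, q₄` of `Q` form a Jordan chain of `H` at the eigenvalue `0`:
`H q₁ = 0` and `H qₖ₊₁ = qₖ`, which is the identity `H Q = Q J` read column by column.
`Q` vanishes below its antidiagonal, so reversing its columns makes it upper triangular and
`det Q = 1 · (-√3) · (2√3) · (-6) = 36`, the reversal of four columns being an even permutation.
-/

open Real Matrix

theorem Matrix.det_eq_sign_revPerm_mul_prod_antidiagonal {R : Type*} [CommRing R] {n : ℕ}
    (M : Matrix (Fin n) (Fin n) R) (h : (M.submatrix id Fin.revPerm).IsUpperTriangular) :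
    M.det = Equiv.Perm.sign (Fin.revPerm : Equiv.Perm (Fin n)) * ∏ i, M i i.rev := by
  have hrev : ∏ i, M i i.rev = Equiv.Perm.sign Fin.revPerm * M.det :=
    (det_of_isUpperTriangular h).symm.trans (det_permute' Fin.revPerm M)
  rw [hrev, ← mul_assoc, ← Int.cast_mul, ← Units.val_mul, Int.units_mul_self, Units.val_one,
    Int.cast_one, one_mul]

theorem Fin.sign_revPerm_four : Equiv.Perm.sign (Fin.revPerm : Equiv.Perm (Fin 4)) = 1 := by
  decide

noncomputable def ep4Hamiltonian : Matrix (Fin 4) (Fin 4) ℝ :=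
  !![-3, √3, 0, 0;
     -√3, -1, 2, 0;
     0, -2, 1, √3;
     0, 0, -√3, 3]

noncomputable def ep4TransitionMatrix : Matrix (Fin 4) (Fin 4) ℝ :=
  !![-6, 6, -3, 1;
     -6 * √3, 4 * √3, -√3, 0;
     -6 * √3, 2 * √3, 0, 0;
     -6, 0, 0, 0]

def nilpotentJordanBlockFour : Matrix (Fin 4) (Fin 4) ℝ :=
  !![0, 1, 0, 0;
     0, 0, 1, 0;
     0, 0, 0, 1;
     0, 0, 0, 0]

theorem det_ep4TransitionMatrix : ep4TransitionMatrix.det = 36 := by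
  rw [det_eq_sign_revPerm_mul_prod_antidiagonal, Fin.sign_revPerm_four]
  · calc ((1 : ℤˣ) : ℤ) * ∏ i, ep4TransitionMatrix i i.rev = 1 * -√3 * (2 * √3) * -6 := by
          simp [ep4TransitionMatrix, Fin.prod_univ_four]
      _ = 36 := by linear_combination 12 * mul_self_sqrt (show (0 : ℝ) ≤ 3 by norm_num)
  · intro i j hij
    fin_cases i <;> fin_cases j <;> simp_all [ep4TransitionMatrix]

theorem ep4Hamiltonian_mul_transitionMatrix :
    ep4Hamiltonian * ep4TransitionMatrix = ep4TransitionMatrix * nilpotentJordanBlockFour := by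
  ext i j
  fin_cases i <;> fin_cases j <;>
    simp [ep4Hamiltonian, ep4TransitionMatrix, nilpotentJordanBlockFour, mul_apply,
      Fin.sum_univ_four] <;>
    ring_nf <;> norm_num

/-- The explicit transition matrix `Q` is invertible and satisfies
`H·Q = Q·J`, where `H` is the EP(4) Hamiltonian and `J` the nilpotent
4×4 Jordan block. -/
theorem stmt_5 (H Q J : Matrix (Fin 4) (Fin 4) ℝ)
    (hH : H = !![-3, Real.sqrt 3, 0, 0;
                 -Real.sqrt 3, -1, 2, 0;
                 0, -2, 1, Real.sqrt 3;
                 0, 0, -Real.sqrt 3, 3])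
    (hQ : Q = !![-6, 6, -3, 1;
                 -6 * Real.sqrt 3, 4 * Real.sqrt 3, -Real.sqrt 3, 0;
                 -6 * Real.sqrt 3, 2 * Real.sqrt 3, 0, 0;
                 -6, 0, 0, 0])
    (hJ : J = !![0, 1, 0, 0;
                 0, 0, 1, 0;
                 0, 0, 0, 1;
                 0, 0, 0, 0]) :
    Q.det ≠ 0 ∧ H * Q = Q * J := by
  subst hH hQ hJ
  exact ⟨ne_of_eq_of_ne det_ep4TransitionMatrix (by norm_num),
    ep4Hamiltonian_mul_transitionMatrix⟩
end

section
/- If H is the N×N matrix with diagonal entries H_{kk} = 2k - N - 1 for k = 1,...,N, superdiagonal entries H_{k,k+1} = √(k(N-k)), and subdiagonal entries H_{k+1,k} = -√(k(N-k)), then H is nilpotent of index N: H^N = 0 and H^{N-1} ≠ 0. -/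
open Matrix Finset

/-!
`H` is the image of a nilpotent element of `sl₂` in its `N`-dimensional irreducible
representation. Concretely, conjugating `H` by the diagonal matrix `diag(√C(N-1, k))` gives
the matrix of the operator `L = (1 + X)² d/dX - (N - 1)(1 + X)` on polynomials of degree `< N`
in the monomial basis. Since `L (1 + X)^j = (j + 1 - N) (1 + X)^(j+1)`, in the basis
`(1 + X)^j` (change of basis: the Pascal matrix) `L` is a weighted shift whose weights
`j + 1 - N`, `j < N - 1`, are nonzero; its `N`-th power vanishes and its `(N-1)`-st does not.
-/

theorem SemiconjBy.pow_eq_zero_iff {M₀ : Type*} [MonoidWithZero M₀] {u a b : M₀}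
    (h : SemiconjBy u a b) (hu : IsUnit u) (n : ℕ) : a ^ n = 0 ↔ b ^ n = 0 := by
  rw [← hu.mul_right_eq_zero, (h.pow_right n).eq, hu.mul_left_eq_zero]

theorem Nat.cast_choose_succ_right_eq {R : Type*} [CommRing R] (m k : ℕ) :
    (m.choose (k + 1) : R) * (k + 1) = m.choose k * (m - k) := by
  rcases le_or_gt k m with hkm | hmk
  · have h := congrArg (Nat.cast (R := R)) (Nat.choose_succ_right_eq m k)
    push_cast [Nat.cast_sub hkm] at h
    exact h
  · simp [Nat.choose_eq_zero_of_lt hmk, Nat.choose_eq_zero_of_lt (hmk.trans (Nat.lt_succ_self k))]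

section Matrices

variable {R : Type*}

def tridiagonal [Zero R] (n : ℕ) (sup sub diag : ℕ → R) : Matrix (Fin n) (Fin n) R :=
  of fun i j =>
    if (j : ℕ) = i + 1 then sup i
    else if (i : ℕ) = j + 1 then sub j
    else if i = j then diag i
    else 0

theorem semiconjBy_diagonal_tridiagonal [CommSemiring R] {n : ℕ} {d sup sub sup' sub' : ℕ → R}
    (diag : ℕ → R) (hsup : ∀ k, k + 1 < n → d k * sup k = sup' k * d (k + 1))
    (hsub : ∀ k, k + 1 < n → d (k + 1) * sub k = sub' k * d k) :
    SemiconjBy (diagonal fun i : Fin n => d i) (tridiagonal n sup sub diag)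
      (tridiagonal n sup' sub' diag) := by
  ext i j
  rw [diagonal_mul, mul_diagonal]
  simp only [tridiagonal, of_apply]
  split_ifs with h₁ h₂ h₃
  · rw [hsup i (h₁ ▸ j.isLt), h₁]
  · rw [h₂, hsub j (h₂ ▸ i.isLt)]
  · rw [h₃, mul_comm]
  · simp

theorem tridiagonal_mul_apply [NonUnitalNonAssocSemiring R] {ι : Type*} {n : ℕ}
    (sup sub diag : ℕ → R) (x : ℕ → ι → R) (hx : ∀ j, x n j = 0) (i : Fin n) (j : ι) :
    (tridiagonal n sup sub diag * of fun (k : Fin n) j => x k j) i j =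
      sup i * x (i + 1) j + diag i * x i j +
        if (i : ℕ) = 0 then 0 else sub (i - 1) * x (i - 1) j := by
  have hsplit : ∀ k : Fin n, tridiagonal n sup sub diag i k * x k j =
      ((if (k : ℕ) = i + 1 then sup i * x k j else 0) + (if (i : ℕ) = k then diag i * x k j else 0))
        + if (i : ℕ) = k + 1 then sub k * x k j else 0 := by
    intro k
    simp only [tridiagonal, of_apply, Fin.ext_iff]
    split_ifs <;> first | omega | simp only [zero_add, add_zero, zero_mul]
  simp only [mul_apply, of_apply, hsplit]
  rw [Fin.sum_univ_eq_sum_range (fun k => ((if k = i + 1 then sup i * x k j else 0) +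
      (if (i : ℕ) = k then diag i * x k j else 0)) + if (i : ℕ) = k + 1 then sub k * x k j else 0),
    sum_add_distrib, sum_add_distrib, sum_ite_eq', sum_ite_eq]
  obtain ⟨i, hi⟩ := i
  simp only [mem_range, hi, if_true]
  congr 1
  · congr 1
    split_ifs with h
    · rfl
    · rw [show i + 1 = n by omega, hx, mul_zero]
  · rcases i with _ | i
    · simp
    · simp only [Nat.add_right_cancel_iff, sum_ite_eq, mem_range]
      simp [show i < n by omega]

def weightedShift [Zero R] (n : ℕ) (w : ℕ → R) : Matrix (Fin n) (Fin n) R :=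
  of fun i j => if (i : ℕ) = j + 1 then w j else 0

theorem mul_weightedShift_apply [NonUnitalNonAssocSemiring R] {ι : Type*} {n : ℕ} (w : ℕ → R)
    (X : Matrix ι (Fin n) R) (i : ι) (j : Fin n) :
    (X * weightedShift n w) i j = if h : (j : ℕ) + 1 < n then X i ⟨j + 1, h⟩ * w j else 0 := by
  simp only [mul_apply, weightedShift, of_apply, mul_ite, mul_zero]
  split_ifs with h
  · rw [Fintype.sum_eq_single ⟨j + 1, h⟩ fun k hk => if_neg fun e => hk (Fin.ext e), if_pos rfl]
  · exact Fintype.sum_eq_zero _ fun k => if_neg (by have := k.isLt; omega)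

theorem weightedShift_pow_apply [CommSemiring R] {n : ℕ} (w : ℕ → R) (m : ℕ) (i j : Fin n) :
    (weightedShift n w ^ m) i j = if (i : ℕ) = j + m then ∏ t ∈ range m, w (j + t) else 0 := by
  induction m generalizing j with
  | zero => simp [one_apply, Fin.ext_iff]
  | succ m ih =>
    rw [pow_succ, mul_weightedShift_apply]
    split_ifs with h₁ h₂ h₂
    · rw [ih, if_pos (by dsimp only; omega), prod_range_succ']
      simp [add_assoc, add_comm 1]
    · rw [ih, if_neg (by dsimp only; omega), zero_mul]
    · omega
    · rfl

theorem weightedShift_pow_self [CommSemiring R] (n : ℕ) (w : ℕ → R) :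
    weightedShift n w ^ n = 0 := by
  ext i j
  rw [weightedShift_pow_apply, if_neg (by omega), Matrix.zero_apply]

theorem weightedShift_pow_pred_ne_zero [CommSemiring R] [NoZeroDivisors R] [Nontrivial R]
    {n : ℕ} (hn : 0 < n) {w : ℕ → R} (hw : ∀ k, k + 1 < n → w k ≠ 0) :
    weightedShift n w ^ (n - 1) ≠ 0 := by
  intro h
  have := congr_fun₂ h ⟨n - 1, by omega⟩ ⟨0, hn⟩
  rw [weightedShift_pow_apply, if_pos (by simp), Matrix.zero_apply, prod_eq_zero_iff] at this
  obtain ⟨k, hk, hwk⟩ := this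
  exact hw k (by rw [mem_range] at hk; omega) (by simpa using hwk)

def pascal [NatCast R] (n : ℕ) : Matrix (Fin n) (Fin n) R :=
  of fun i j => ((j : ℕ).choose i : R)

theorem det_pascal [CommRing R] (n : ℕ) : (pascal n : Matrix (Fin n) (Fin n) R).det = 1 := by
  rw [det_of_isUpperTriangular fun i j (hji : j < i) => by
    simp [pascal, Nat.choose_eq_zero_of_lt hji]]
  simp [pascal]

theorem isUnit_pascal [CommRing R] (n : ℕ) : IsUnit (pascal n : Matrix (Fin n) (Fin n) R) := by
  rw [isUnit_iff_isUnit_det, det_pascal]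
  exact isUnit_one

variable (R) [CommRing R]

def epMonomialMatrix (N : ℕ) : Matrix (Fin N) (Fin N) R :=
  tridiagonal N (fun k => k + 1) (fun k => k + 1 - N) (fun k => 2 * (k + 1) - N - 1)

def epShift (N : ℕ) : Matrix (Fin N) (Fin N) R :=
  weightedShift N fun k => k + 1 - N

theorem semiconjBy_pascal_epShift (N : ℕ) :
    SemiconjBy (pascal N) (epShift R N) (epMonomialMatrix R N) := by
  ext i j
  have hrhs : ((pascal N : Matrix (Fin N) (Fin N) R) * epShift R N) i j =
      ((j : ℕ) + 1).choose i * ((j : R) + 1 - N) := by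
    rw [epShift, mul_weightedShift_apply]
    split_ifs with h
    · simp [pascal]
    · rw [← Nat.cast_add_one, show (j : ℕ) + 1 = N by omega, sub_self, mul_zero]
  rw [hrhs, epMonomialMatrix, pascal, tridiagonal_mul_apply _ _ _
    (fun k (j : Fin N) => ((j : ℕ).choose k : R))
    fun j => by simp [Nat.choose_eq_zero_of_lt j.isLt]]
  obtain ⟨i, hi⟩ := i
  rcases i with _ | i
  · simp only [Nat.choose_zero_right, zero_add, Nat.choose_one_right, ↓reduceIte]
    push_cast
    ring
  · have h₁ := Nat.cast_choose_succ_right_eq (R := R) j (i + 1)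
    have h₂ := Nat.cast_choose_succ_right_eq (R := R) j i
    simp only [Nat.choose_succ_succ', Nat.add_eq_zero_iff, one_ne_zero, and_false, ↓reduceIte,
      add_tsub_cancel_right]
    push_cast at h₁ h₂ ⊢
    linear_combination -h₁ - h₂

end Matrices

theorem Real.sqrt_mul_sqrt_eq_mul_sqrt {a b c e : ℝ} (ha : 0 ≤ a) (hc : 0 ≤ c)
    (h : a * b = c ^ 2 * e) : √a * √b = c * √e := by
  rw [← Real.sqrt_mul ha, h, Real.sqrt_mul (sq_nonneg c), Real.sqrt_sq hc]

noncomputable def epMatrix (N : ℕ) : Matrix (Fin N) (Fin N) ℝ :=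
  tridiagonal N (fun k => √((k + 1) * (N - (k + 1)))) (fun k => -√((k + 1) * (N - (k + 1))))
    (fun k => 2 * (k + 1) - N - 1)

noncomputable def sqrtChooseDiagonal (N : ℕ) : Matrix (Fin N) (Fin N) ℝ :=
  diagonal fun i => √((N - 1).choose i)

theorem isUnit_sqrtChooseDiagonal (N : ℕ) : IsUnit (sqrtChooseDiagonal N) :=
  isUnit_diagonal.mpr <| Pi.isUnit_iff.mpr fun i =>
    (Real.sqrt_pos.mpr (Nat.cast_pos.mpr (Nat.choose_pos (by omega)))).ne'.isUnit

theorem sqrt_choose_mul_sqrt (m k : ℕ) :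
    √(m.choose k) * √((k + 1) * (m + 1 - (k + 1))) = (k + 1) * √(m.choose (k + 1)) := by
  refine Real.sqrt_mul_sqrt_eq_mul_sqrt (by positivity) (by positivity) ?_
  linear_combination (-(k : ℝ) - 1) * Nat.cast_choose_succ_right_eq (R := ℝ) m k

theorem sqrt_choose_succ_mul_sqrt (m k : ℕ) (hk : k ≤ m) :
    √(m.choose (k + 1)) * √((k + 1) * (m + 1 - (k + 1))) = (m - k) * √(m.choose k) := by
  have hkm : (k : ℝ) ≤ m := by exact_mod_cast hk
  refine Real.sqrt_mul_sqrt_eq_mul_sqrt (by positivity) (by linarith) ?_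
  linear_combination ((m : ℝ) - k) * Nat.cast_choose_succ_right_eq (R := ℝ) m k

theorem semiconjBy_sqrtChooseDiagonal_epMatrix (N : ℕ) :
    SemiconjBy (sqrtChooseDiagonal N) (epMatrix N) (epMonomialMatrix ℝ N) := by
  rcases N with _ | m
  · exact Subsingleton.elim _ _
  refine semiconjBy_diagonal_tridiagonal (d := fun k => √(m.choose k)) _
    (fun k _ => ?_) (fun k hk => ?_)
  · push_cast
    exact sqrt_choose_mul_sqrt m k
  · push_cast
    rw [mul_neg, sqrt_choose_succ_mul_sqrt m k (by omega)]
    ring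

/-- The `N×N` tridiagonal matrix with `H_{kk} = 2k - N - 1`,
`H_{k,k+1} = √(k(N-k)) = -H_{k+1,k}`, is nilpotent of index exactly `N`:
`H^N = 0` and `H^{N-1} ≠ 0`. -/
theorem stmt_8 (N : ℕ) (hN : 0 < N) (H : Matrix (Fin N) (Fin N) ℝ)
    (hH : H = fun i j =>
      if j.val = i.val + 1 then
        Real.sqrt ((i.val + 1) * (N - (i.val + 1)))
      else if i.val = j.val + 1 then
        -Real.sqrt ((j.val + 1) * (N - (j.val + 1)))
      else if i = j then
        (2 * (i.val + 1) : ℝ) - N - 1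
      else 0) :
    H ^ N = 0 ∧ H ^ (N - 1) ≠ 0 := by
  have hH_ep : H = epMatrix N := hH
  have hpow (n : ℕ) : H ^ n = 0 ↔ epShift ℝ N ^ n = 0 := by
    rw [hH_ep, (semiconjBy_sqrtChooseDiagonal_epMatrix N).pow_eq_zero_iff
      (isUnit_sqrtChooseDiagonal N), ← (semiconjBy_pascal_epShift ℝ N).pow_eq_zero_iff
      (isUnit_pascal N)]
  rw [hpow, Ne, hpow]
  refine ⟨weightedShift_pow_self N _, weightedShift_pow_pred_ne_zero hN fun k hk => ?_⟩
  rw [sub_ne_zero, ← Nat.cast_add_one, Ne, Nat.cast_inj]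
  omega
end

section
/- For the 6×6 tridiagonal matrix C with diagonal (−5,−3,−1,1,3,5), superdiagonal (√5, √8, √9, √8, √5), and antisymmetric subdiagonal, C is nilpotent of index 6: C⁶ = 0 and C⁵ ≠ 0 (the EP(6) degeneracy of the decoupled t = 7 Hamiltonian at N = 8). -/
/-!
Conjugating by the positive diagonal matrix `D = diag(d₁, …, d₆)` with `d₁ = 1`,
`d_{k+1} = aₖ dₖ` turns `C` into the integer tridiagonal matrix with the same diagonal,
superdiagonal `1` and subdiagonal `-aₖ² = -k(6-k)`. Both powers are then a finite
computation with integers.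
-/

open Real Matrix

theorem SemiconjBy.eq_zero_iff {M₀ : Type*} [MonoidWithZero M₀] {a x y : M₀}
    (h : SemiconjBy a x y) (ha : IsUnit a) : x = 0 ↔ y = 0 := by
  rw [← ha.mul_right_eq_zero, h.eq, ha.mul_left_eq_zero]

def rescaledMatrix : Matrix (Fin 6) (Fin 6) ℤ :=
  !![-5, 1, 0, 0, 0, 0;
     -5, -3, 1, 0, 0, 0;
     0, -8, -1, 1, 0, 0;
     0, 0, -9, 1, 1, 0;
     0, 0, 0, -8, 3, 1;
     0, 0, 0, 0, -5, 5]

lemma rescaledMatrix_pow_six : rescaledMatrix ^ 6 = 0 := by decide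

lemma rescaledMatrix_pow_five_ne_zero : rescaledMatrix ^ 5 ≠ 0 := by decide

noncomputable def scaling : Fin 6 → ℝ :=
  ![1, √5, √5 * √8, √5 * √8 * √9, √5 * √8 * √9 * √8, √5 * √8 * √9 * √8 * √5]

lemma isUnit_diagonal_scaling : IsUnit (diagonal scaling) := by
  refine isUnit_diagonal.mpr (Pi.isUnit_iff.mpr fun i => IsUnit.mk0 _ ?_)
  fin_cases i <;> simp [scaling]

lemma semiconjBy_diagonal_scaling :
    SemiconjBy (diagonal scaling)
      !![-5, √5, 0, 0, 0, 0;
         -√5, -3, √8, 0, 0, 0;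
         0, -√8, -1, √9, 0, 0;
         0, 0, -√9, 1, √8, 0;
         0, 0, 0, -√8, 3, √5;
         0, 0, 0, 0, -√5, 5]
      ((Int.castRingHom ℝ).mapMatrix rescaledMatrix) := by
  have h5 := Real.mul_self_sqrt (show (0 : ℝ) ≤ 5 by norm_num)
  have h8 := Real.mul_self_sqrt (show (0 : ℝ) ≤ 8 by norm_num)
  have h9 := Real.mul_self_sqrt (show (0 : ℝ) ≤ 9 by norm_num)
  ext i j
  simp only [diagonal_mul, mul_diagonal]
  fin_cases i <;> fin_cases j <;> simp [scaling, rescaledMatrix] <;> grind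

/-- The 6×6 tridiagonal matrix `C` with diagonal `(-5,-3,-1,1,3,5)`,
superdiagonal `(√5, √8, √9, √8, √5)` and antisymmetric subdiagonal is
nilpotent of index 6: `C⁶ = 0` and `C⁵ ≠ 0` (the EP(6) degeneracy of the
decoupled `t = 7` Hamiltonian at `N = 8`). -/
theorem stmt_16 (C : Matrix (Fin 6) (Fin 6) ℝ)
    (hC : C = !![-5, Real.sqrt 5, 0, 0, 0, 0;
                 -Real.sqrt 5, -3, Real.sqrt 8, 0, 0, 0;
                 0, -Real.sqrt 8, -1, Real.sqrt 9, 0, 0;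
                 0, 0, -Real.sqrt 9, 1, Real.sqrt 8, 0;
                 0, 0, 0, -Real.sqrt 8, 3, Real.sqrt 5;
                 0, 0, 0, 0, -Real.sqrt 5, 5]) :
    C ^ 6 = 0 ∧ C ^ 5 ≠ 0 := by
  have C_pow_eq_zero_iff (n : ℕ) : C ^ n = 0 ↔ rescaledMatrix ^ n = 0 := by
    rw [hC, (semiconjBy_diagonal_scaling.pow_right n).eq_zero_iff isUnit_diagonal_scaling,
      ← map_pow, map_eq_zero_iff (Int.castRingHom ℝ).mapMatrix (map_injective Int.cast_injective)]
  exact ⟨(C_pow_eq_zero_iff 6).mpr rescaledMatrix_pow_six,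
    (C_pow_eq_zero_iff 5).not.mpr rescaledMatrix_pow_five_ne_zero⟩
end
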